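/- arXiv:2111.10482 — 4 statements merged into one kernel-verified Lean document; each statement's English description precedes it below -/
import Mathlib

section
/- Let q : X → Y be a continuous, closed, surjective map between topological spaces. If Y is a D-space and for every y ∈ Y the fiber q⁻¹(y), with the subspace topology from X, is a D-space, then X is a D-space. -/
/-! For a neighbornet `U`, choose in every fiber `q⁻¹(y)` a closed discrete `D y` with
`q⁻¹(y) ⊆ U(D y)`. As `q` is closed, each `y` has an open neighbourhood `V y` whose preimage
lies in `U(D y)`; a closed discrete `E ⊆ Y` with `V(E) = Y` then gives `⋃_{y ∈ E} D y`, which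
covers `X` and is closed discrete because `E` is and each `D y` is so inside its own fiber. -/

open TopologicalSpace Set Cardinal

universe u v

/-- `U` is a neighbornet (neighborhood assignment): each `U x` is open and contains `x`. -/
def IsNeighbornet {X : Type*} [TopologicalSpace X] (U : X → Set X) : Prop :=
  ∀ x, IsOpen (U x) ∧ x ∈ U x

/-- A space is a D-space if every neighbornet admits a closed discrete kernel. -/
def IsDSpace (X : Type*) [TopologicalSpace X] : Prop :=
  ∀ U : X → Set X, IsNeighbornet U →
    ∃ D : Set X, IsClosed D ∧ DiscreteTopology D ∧ (⋃ x ∈ D, U x) = Set.univ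

/-- A space is hereditarily D if every subspace is a D-space. -/
def HereditarilyD (X : Type*) [TopologicalSpace X] : Prop :=
  ∀ A : Set X, IsDSpace A

/-- The box product: the product set with the box topology. -/
def BoxProd (X : ℕ → Type*) : Type _ := ∀ n, X n

instance boxTopology (X : ℕ → Type*) [∀ n, TopologicalSpace (X n)] :
    TopologicalSpace (BoxProd X) :=
  TopologicalSpace.generateFrom
    {S | ∃ U : ∀ n, Set (X n), (∀ n, IsOpen (U n)) ∧ S = {f : BoxProd X | ∀ n, f n ∈ U n}}

/-- Mod finite equivalence on countable products. -/
def nablaSetoid (X : ℕ → Type*) : Setoid (∀ n, X n) where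
  r f g := {n | f n ≠ g n}.Finite
  iseqv := ⟨fun f => by simp,
    fun {f g} h => h.subset fun n hn e => hn e.symm,
    fun {f g h} h1 h2 => (h1.union h2).subset fun n hn => by
      by_contra hc
      simp only [Set.mem_union, Set.mem_setOf_eq] at hc
      push_neg at hc
      exact hn (hc.1.trans hc.2)⟩

/-- The nabla product: the box product quotiented by mod finite equivalence. -/
def NablaProd (X : ℕ → Type*) [∀ n, TopologicalSpace (X n)] : Type _ :=
  Quotient (nablaSetoid X)

instance nablaTopology (X : ℕ → Type*) [∀ n, TopologicalSpace (X n)] :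
    TopologicalSpace (NablaProd X) :=
  TopologicalSpace.coinduced
    (fun f : BoxProd X => Quotient.mk (nablaSetoid X) f) inferInstance

/-- `U` is below `T` if `U x ⊆ T x` for every `x`. -/
def IsBelow {X : Type*} [TopologicalSpace X] (U T : X → Set X) : Prop :=
  ∀ x, U x ⊆ T x

/-- `D` is `U`-sticky: closed discrete, and whenever `U x` meets `D`, `x ∈ U(D)`. -/
def USticky {X : Type*} [TopologicalSpace X] (U : X → Set X) (D : Set X) : Prop :=
  IsClosed D ∧ DiscreteTopology D ∧ ∀ x, (U x ∩ D).Nonempty → x ∈ ⋃ d ∈ D, U d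

/-- `S` is super-sticky below `T`. -/
def SuperSticky {X : Type*} [TopologicalSpace X] (T : X → Set X) (S : Set X) : Prop :=
  IsClosed S ∧ DiscreteTopology S ∧
    ∀ U : X → Set X, IsNeighbornet U → IsBelow U T → ∀ x, (U x ∩ S).Nonempty → x ∈ S

/-- A space is scattered if every nonempty subset has a point isolated in it. -/
def Scattered (X : Type*) [TopologicalSpace X] : Prop :=
  ∀ S : Set X, S.Nonempty → ∃ x ∈ S, ∃ U : Set X, IsOpen U ∧ U ∩ S = {x}

/-- One step of the Cantor–Bendixson derivative: remove the isolated points of `S`. -/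
def derivStep (X : Type*) [TopologicalSpace X] (S : Set X) : Set X :=
  {x ∈ S | ¬ ∃ U : Set X, IsOpen U ∧ U ∩ S = {x}}

/-- The Cantor–Bendixson derivatives `X^(o)`. -/
noncomputable def cbDeriv (X : Type*) [TopologicalSpace X] (o : Ordinal.{0}) : Set X :=
  Ordinal.lt_wf.fix
    (fun _ ih => ⋂ (o' : Ordinal) (h : o' < _), derivStep X (ih o' h)) o

/-- The Cantor–Bendixson (scattered) height of a point. -/
noncomputable def cbHeight {X : Type*} [TopologicalSpace X] (x : X) : Ordinal.{0} :=
  sSup {o | x ∈ cbDeriv X o}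

/-- The dominating number 𝔡. -/
noncomputable def domNum : Cardinal.{0} :=
  sInf {c : Cardinal | ∃ D : Set (ℕ → ℕ), c = #D ∧
    ∀ f : ℕ → ℕ, ∃ g ∈ D, ∀ n, f n ≤ g n}

/-- The weight of a space: least cardinality of a base. -/
noncomputable def weight (X : Type u) [TopologicalSpace X] : Cardinal.{u} :=
  sInf {c | ∃ B : Set (Set X), c = #B ∧ TopologicalSpace.IsTopologicalBasis B}

/-- The extent of a space: sup of cardinalities of closed discrete subsets. -/
noncomputable def extent (Y : Type u) [TopologicalSpace Y] : Cardinal.{u} :=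
  sSup {c | ∃ C : Set Y, IsClosed C ∧ DiscreteTopology C ∧ c = #C}

/-- A relation `R` is nearly good. -/
def NearlyGood {Y : Type*} [TopologicalSpace Y] (R : Y → Y → Prop) : Prop :=
  ∀ A : Set Y, ∀ x ∈ closure A, ∃ y ∈ A, R x y

/-- `Z` is `U`-close. -/
def UClose {Y : Type*} [TopologicalSpace Y] (U : Y → Set Y) (Z : Set Y) : Prop :=
  ∀ x ∈ Z, Z ⊆ U x

/-- The G_δ modification of a topology. -/
def gdeltaTop (X : Type u) [TopologicalSpace X] : TopologicalSpace X :=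
  TopologicalSpace.generateFrom
    {S | ∃ U : ℕ → Set X, (∀ n, IsOpen (U n)) ∧ S = ⋂ n, U n}

/-- The countable box topology on `L → K` over a discrete space `K`. -/
def ctbBoxTop (L K : Type*) : TopologicalSpace (L → K) :=
  TopologicalSpace.generateFrom
    {S | ∃ (x : L → K) (C : Set L), C.Countable ∧ S = {y | ∀ γ ∈ C, y γ = x γ}}

open Filter Topology

theorem disjoint_nhdsNE_image_val {X : Type*} [TopologicalSpace X] {S : Set X} {D : Set S}
    (hD : IsClosed D) [DiscreteTopology D] {x : X} (hx : x ∈ S) :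
    Disjoint (𝓝[≠] x) (𝓟 (Subtype.val '' D)) := by
  have h := isClosed_and_discrete_iff.mp ⟨hD, isDiscrete_iff_discreteTopology.mpr ‹_›⟩ ⟨x, hx⟩
  rw [nhdsWithin_subtype, disjoint_comap_iff_map', map_principal] at h
  rw [disjoint_principal_right, mem_nhdsWithin_iff_eventually] at h ⊢
  filter_upwards [h] with z hz hzx hzD
  obtain ⟨w, -, rfl⟩ := id hzD
  exact hz ⟨w, fun hw => hzx (by rw [hw]; rfl), rfl⟩ hzD

theorem IsDSpace.exists_subset_cover {X : Type*} [TopologicalSpace X] {S : Set X}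
    (hS : IsDSpace S) {U : X → Set X} (hU : IsNeighbornet U) :
    ∃ D ⊆ S, (∀ x ∈ S, Disjoint (𝓝[≠] x) (𝓟 D)) ∧ S ⊆ ⋃ d ∈ D, U d := by
  obtain ⟨D, hDc, _, hcov⟩ := hS (fun x => Subtype.val ⁻¹' U x)
    fun x => ⟨(hU x).1.preimage continuous_subtype_val, (hU x).2⟩
  refine ⟨Subtype.val '' D, Subtype.coe_image_subset S D,
    fun x hx => disjoint_nhdsNE_image_val hDc hx, fun x hx => ?_⟩
  obtain ⟨d, hd, hxd⟩ := mem_iUnion₂.mp (hcov.symm ▸ mem_univ (⟨x, hx⟩ : S))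
  exact mem_biUnion (mem_image_of_mem _ hd) hxd

theorem IsClosedMap.exists_neighbornet_preimage_subset {X Y : Type*} [TopologicalSpace X]
    [TopologicalSpace Y] {q : X → Y} (hq : IsClosedMap q) {W : Y → Set X}
    (hW : ∀ y, q ⁻¹' {y} ⊆ W y) (hWo : ∀ y, IsOpen (W y)) :
    ∃ V : Y → Set Y, IsNeighbornet V ∧ ∀ y, q ⁻¹' V y ⊆ W y := by
  have h y : ∀ᶠ y' in 𝓝 y, q ⁻¹' {y'} ⊆ W y :=
    hq.eventually_nhds_fiber y fun x hx => (hWo y).mem_nhds (hW y hx)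
  choose V hVW hVo hyV using fun y => eventually_nhds_iff.mp (h y)
  exact ⟨V, fun y => ⟨hVo y, hyV y⟩, fun y x hx => hVW y (q x) hx rfl⟩

theorem isClosed_discrete_biUnion_of_subset_fiber {X Y : Type*} [TopologicalSpace X]
    [TopologicalSpace Y] {q : X → Y} (hq : Continuous q) {E : Set Y} (hE : IsClosed E)
    [DiscreteTopology E] {D : Y → Set X} (hDq : ∀ y, D y ⊆ q ⁻¹' {y})
    (hD : ∀ x, Disjoint (𝓝[≠] x) (𝓟 (D (q x)))) :
    IsClosed (⋃ y ∈ E, D y) ∧ DiscreteTopology (⋃ y ∈ E, D y) := by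
  rw [← isDiscrete_iff_discreteTopology, isClosed_and_discrete_iff]
  intro x
  have hE' := isClosed_and_discrete_iff.mp ⟨hE, isDiscrete_iff_discreteTopology.mpr ‹_›⟩ (q x)
  have hDx := hD x
  rw [disjoint_principal_right, mem_nhdsWithin_iff_eventually] at hE' hDx ⊢
  filter_upwards [hq.continuousAt hE', hDx] with z hzE hzD hzx hz
  obtain ⟨y, hy, hzy⟩ := mem_iUnion₂.mp hz
  obtain rfl : q z = y := hDq y hzy
  by_cases hqz : q z = q x
  · exact hzD hzx (hqz ▸ hzy)
  · exact hzE hqz hy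

theorem closed_preimage_of_DSpace_general {X Y : Type*} [TopologicalSpace X] [TopologicalSpace Y]
    (q : X → Y) (hcont : Continuous q) (hclosed : IsClosedMap q) (hY : IsDSpace Y)
    (hfib : ∀ y : Y, IsDSpace (q ⁻¹' {y} : Set X)) :
    IsDSpace X := by
  intro U hU
  choose D hDq hDd hDU using fun y => (hfib y).exists_subset_cover hU
  obtain ⟨V, hV, hVU⟩ := hclosed.exists_neighbornet_preimage_subset hDU
    fun y => isOpen_biUnion fun d _ => (hU d).1
  obtain ⟨E, hEc, _, hEV⟩ := hY V hV
  obtain ⟨hKc, hKd⟩ :=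
    isClosed_discrete_biUnion_of_subset_fiber hcont hEc hDq fun x => hDd (q x) x rfl
  refine ⟨⋃ y ∈ E, D y, hKc, hKd, eq_univ_of_forall fun x => ?_⟩
  obtain ⟨y, hy, hxy⟩ := mem_iUnion₂.mp (hEV ▸ mem_univ (q x))
  obtain ⟨d, hd, hxd⟩ := mem_iUnion₂.mp (hVU y hxy)
  exact mem_biUnion (mem_biUnion hy hd) hxd

/-- If `q : X → Y` is continuous, closed and surjective, `Y` is a D-space, and every
fiber `q ⁻¹' {y}` is a D-space in the subspace topology, then `X` is a D-space. -/
theorem closed_preimage_of_DSpace {X Y : Type*} [TopologicalSpace X] [TopologicalSpace Y]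
    (q : X → Y) (hcont : Continuous q) (hclosed : IsClosedMap q)
    (hsurj : Function.Surjective q) (hY : IsDSpace Y)
    (hfib : ∀ y : Y, IsDSpace (q ⁻¹' {y} : Set X)) :
    IsDSpace X :=
  closed_preimage_of_DSpace_general q hcont hclosed hY hfib
end

section
/- Suppose X_n is a compact Hausdorff space for every n ∈ ω. Then the box product □_n X_n is a D-space if and only if the nabla product ∇_n X_n is a D-space. -/
open TopologicalSpace Set Cardinal

universe u v

/-!
The quotient map `□ X → ∇ X` is continuous, surjective and closed, and its fibres are σ-compact:
the fibre of `f` is the union over `n` of the compact sets of points agreeing with `f` from `n` on.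
For closedness, the saturation of a closed `F` is the union over `n` of the points having an
`n`-tail variant in `F`; compactness of `∏_{i<n} X i` and a tube-lemma argument give, for each
`n`, a box around a point outside the saturation which misses that set and constrains only the
coordinates `≥ n`, and these boxes are diagonalised into a single one.

Closed continuous images of D-spaces are D-spaces. Conversely, along a closed map with σ-compact
fibres, choose in every fibre a locally finite set whose neighbourhoods cover it; a kernel
downstairs for the neighbornet `z ↦ {points whose fibre is covered by the set chosen over z}`
lifts to the union of the sets chosen over it.
-/

open Filter Topology Function

section DSpace

variable {Y Z : Type*} [TopologicalSpace Y] [TopologicalSpace Z]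

theorem isClosed_and_isDiscrete_iff_forall_exists_mem_nhds {D : Set Y} :
    IsClosed D ∧ IsDiscrete D ↔ ∀ y, ∃ N ∈ 𝓝 y, N ∩ D ⊆ {y} := by
  rw [isClosed_and_discrete_iff]
  refine forall_congr' fun y => ?_
  rw [disjoint_principal_right, mem_nhdsWithin_iff_exists_mem_nhds_inter]
  refine exists_congr fun N => and_congr_right fun _ => ⟨fun h x hx => ?_, fun h x hx hxD => ?_⟩
  · by_contra hne
    exact h ⟨hx.1, hne⟩ hx.2
  · exact hx.2 (h ⟨hx.1, hxD⟩)

theorem isClosed_and_isDiscrete_of_forall_exists_mem_nhds_finite [T1Space Y] {D : Set Y}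
    (h : ∀ y, ∃ N ∈ 𝓝 y, (N ∩ D).Finite) : IsClosed D ∧ IsDiscrete D :=
  compl_mem_codiscrete_iff.mp <|
    codiscreteWithin_iff_locallyFiniteComplementWithin.mpr fun y _ => by simpa using h y

theorem IsClosedMap.isClosed_and_isDiscrete_image {f : Y → Z} (hf : IsClosedMap f) {D : Set Y}
    (hD : IsClosed D ∧ IsDiscrete D) : IsClosed (f '' D) ∧ IsDiscrete (f '' D) := by
  refine isClosed_and_isDiscrete_iff_forall_exists_mem_nhds.mpr fun z => ?_
  have hrest : IsClosed (f '' (D \ f ⁻¹' {z})) :=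
    hf _ (isClosed_of_subset_discrete_closed sdiff_subset hD.2 hD.1)
  refine ⟨(f '' (D \ f ⁻¹' {z}))ᶜ, hrest.compl_mem_nhds fun ⟨y, hy, hyz⟩ => hy.2 hyz, ?_⟩
  rintro _ ⟨hnot, y, hy, rfl⟩
  by_contra hne
  exact hnot ⟨y, ⟨hy, hne⟩, rfl⟩

theorem IsSigmaCompact.exists_locallyFinite_kernel {U : Y → Set Y} (hU : IsNeighbornet U)
    {S : Set Y} (hS : IsSigmaCompact S) :
    ∃ C ⊆ S, S ⊆ ⋃ c ∈ C, U c ∧ ∀ y ∈ S, ∃ N ∈ 𝓝 y, (N ∩ C).Finite := by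
  obtain ⟨K, hK, rfl⟩ := hS
  have hpick : ∀ n (A : Set Y), ∃ F : Finset Y,
      ↑F ⊆ K n \ A ∧ (IsOpen A → K n \ A ⊆ ⋃ x ∈ F, U x) := by
    intro n A
    by_cases hA : IsOpen A
    · obtain ⟨F, hFK, hFcov⟩ :=
        ((hK n).diff hA).elim_nhds_subcover U fun x _ => (hU x).1.mem_nhds (hU x).2
      exact ⟨F, hFK, fun _ => hFcov⟩
    · exact ⟨∅, by simp, fun h => absurd h hA⟩
  choose F hFK hFcov using hpick
  -- `A n` is the part of the space already covered after the first `n` compact pieces.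
  let A : ℕ → Set Y := fun n => Nat.rec ∅ (fun m Am => Am ∪ ⋃ x ∈ F m Am, U x) n
  have hA_succ : ∀ m, A (m + 1) = A m ∪ ⋃ x ∈ F m (A m), U x := fun _ => rfl
  have hA_open : ∀ n, IsOpen (A n) := by
    intro n
    induction n with
    | zero => exact isOpen_empty
    | succ m ih => exact ih.union (isOpen_biUnion fun x _ => (hU x).1)
  have hA_mono : Monotone A := monotone_nat_of_le_succ fun m => subset_union_left
  have hK_sub : ∀ n, K n ⊆ A (n + 1) := fun n y hy => by
    by_cases hyA : y ∈ A n
    · exact Or.inl hyA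
    · exact Or.inr (hFcov n _ (hA_open n) ⟨hy, hyA⟩)
  let C : Set Y := ⋃ n, (F n (A n) : Set Y)
  have hA_cov : ∀ n, A n ⊆ ⋃ c ∈ C, U c := by
    intro n
    induction n with
    | zero => exact empty_subset _
    | succ m ih =>
      rw [hA_succ]
      exact union_subset ih (biUnion_mono (fun x hx => mem_iUnion_of_mem m hx) fun _ _ => le_rfl)
  refine ⟨C, iUnion_mono fun n => (hFK n _).trans sdiff_subset,
    fun y hy => ?_, fun y hy => ?_⟩
  · obtain ⟨n, hn⟩ := mem_iUnion.mp hy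
    exact hA_cov (n + 1) (hK_sub n hn)
  · obtain ⟨n, hn⟩ := mem_iUnion.mp hy
    refine ⟨A (n + 1), (hA_open (n + 1)).mem_nhds (hK_sub n hn),
      ((finite_lt_nat (n + 1)).biUnion fun k _ => (F k (A k)).finite_toSet).subset ?_⟩
    rintro x ⟨hxA, hxC⟩
    obtain ⟨k, hk⟩ := mem_iUnion.mp hxC
    refine mem_biUnion (show k < n + 1 from lt_of_not_ge fun hnk => ?_) hk
    exact (hFK k _ hk).2 (hA_mono hnk hxA)

theorem IsDSpace.of_isClosedMap {f : Y → Z} (hY : IsDSpace Y) (hf : Continuous f)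
    (hfc : IsClosedMap f) (hsurj : Surjective f) : IsDSpace Z := by
  intro V hV
  obtain ⟨D, hDcl, hDdisc, hDcov⟩ :=
    hY (fun y => f ⁻¹' V (f y)) fun y => ⟨(hV (f y)).1.preimage hf, (hV (f y)).2⟩
  obtain ⟨hcl, hdisc⟩ := hfc.isClosed_and_isDiscrete_image ⟨hDcl, ⟨hDdisc⟩⟩
  refine ⟨f '' D, hcl, hdisc.to_subtype, eq_univ_of_forall fun z => ?_⟩
  obtain ⟨y, rfl⟩ := hsurj z
  obtain ⟨d, hd, hyd⟩ := mem_iUnion₂.mp (hDcov ▸ mem_univ y)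
  exact mem_biUnion (mem_image_of_mem f hd) hyd

theorem IsDSpace.of_isClosedMap_of_isSigmaCompact_preimage [T1Space Y] {f : Y → Z}
    (hZ : IsDSpace Z) (hf : Continuous f) (hfc : IsClosedMap f)
    (hfib : ∀ z, IsSigmaCompact (f ⁻¹' {z})) : IsDSpace Y := by
  intro U hU
  choose C hC_fib hC_cov hC_fin using fun z => (hfib z).exists_locallyFinite_kernel hU
  -- `V z` consists of the points whose whole fibre is covered by `U (C z)`.
  let V : Z → Set Z := fun z => (f '' (⋃ c ∈ C z, U c)ᶜ)ᶜ
  have hV : IsNeighbornet V := fun z =>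
    ⟨(hfc _ (isOpen_biUnion fun c _ => (hU c).1).isClosed_compl).isOpen_compl,
      fun ⟨_, hyW, hyz⟩ => hyW (hC_cov z hyz)⟩
  obtain ⟨E, hEcl, hEdisc, hEcov⟩ := hZ V hV
  have hE := isClosed_and_isDiscrete_iff_forall_exists_mem_nhds.mp ⟨hEcl, ⟨hEdisc⟩⟩
  have hD : ∀ y, ∃ N ∈ 𝓝 y, (N ∩ ⋃ z ∈ E, C z).Finite := by
    intro y
    obtain ⟨O, hO, hOE⟩ := hE (f y)
    obtain ⟨N, hN, hNfin⟩ := hC_fin (f y) y rfl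
    refine ⟨N ∩ f ⁻¹' O, inter_mem hN (hf.continuousAt hO), hNfin.subset ?_⟩
    rintro x ⟨⟨hxN, hxO⟩, hxD⟩
    obtain ⟨z, hz, hxz⟩ := mem_iUnion₂.mp hxD
    have hfx : f x = z := hC_fib z hxz
    obtain rfl : z = f y := hOE ⟨hfx ▸ hxO, hz⟩
    exact ⟨hxN, hxz⟩
  obtain ⟨hDcl, hDdisc⟩ := isClosed_and_isDiscrete_of_forall_exists_mem_nhds_finite hD
  refine ⟨_, hDcl, hDdisc.to_subtype, eq_univ_of_forall fun y => ?_⟩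
  obtain ⟨z, hz, hyz⟩ := mem_iUnion₂.mp (hEcov ▸ mem_univ (f y))
  obtain ⟨c, hc, hyc⟩ := mem_iUnion₂.mp (not_not.mp fun hy => hyz ⟨y, hy, rfl⟩)
  exact mem_biUnion (mem_biUnion hz hc) hyc

end DSpace

namespace BoxProd

variable {X : ℕ → Type*} [∀ n, TopologicalSpace (X n)]

def box (U : ∀ n, Set (X n)) : Set (BoxProd X) := {f | ∀ n, f n ∈ U n}

theorem isOpen_box {U : ∀ n, Set (X n)} (hU : ∀ n, IsOpen (U n)) : IsOpen (box U) :=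
  .basic _ ⟨U, hU, rfl⟩

theorem isTopologicalBasis_box :
    IsTopologicalBasis {S | ∃ U : ∀ n, Set (X n), (∀ n, IsOpen (U n)) ∧ S = box U} :=
  isTopologicalBasis_of_subbasis_of_finiteInter rfl
    ⟨⟨fun _ => univ, fun _ => isOpen_univ, by simp [box]⟩,
      by
        rintro _ ⟨U, hU, rfl⟩ _ ⟨V, hV, rfl⟩
        exact ⟨fun n => U n ∩ V n, fun n => (hU n).inter (hV n),
          by ext; simp [box, forall_and]⟩⟩

theorem exists_box_subset {W : Set (BoxProd X)} (hW : IsOpen W) {g : BoxProd X} (hg : g ∈ W) :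
    ∃ U : ∀ n, Set (X n), (∀ n, IsOpen (U n)) ∧ g ∈ box U ∧ box U ⊆ W := by
  obtain ⟨_, ⟨U, hU, rfl⟩, hgU, hUW⟩ := isTopologicalBasis_box.exists_subset_of_mem_open hg hW
  exact ⟨U, hU, hgU, hUW⟩

protected theorem continuous_apply (n : ℕ) : Continuous fun f : BoxProd X => f n := by
  classical
  refine continuous_def.mpr fun A hA => ?_
  convert isOpen_box (U := update (fun _ => univ) n A) fun i => ?_ using 1
  · ext f
    refine ⟨fun hf i => ?_, fun hf => by simpa using hf n⟩
    rcases eq_or_ne i n with rfl | hi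
    · simpa using hf
    · simp [hi]
  · rcases eq_or_ne i n with rfl | hi
    · simpa using hA
    · simp [hi]

instance [∀ n, T1Space (X n)] : T1Space (BoxProd X) :=
  t1Space_of_injective_of_continuous (Y := ∀ n, X n) (f := id) injective_id
    (continuous_pi BoxProd.continuous_apply)

def tailSet (n : ℕ) (f : BoxProd X) : Set (BoxProd X) := {g | ∀ i, n ≤ i → g i = f i}

theorem isCompact_tailSet [∀ n, CompactSpace (X n)] (n : ℕ) (f : BoxProd X) :
    IsCompact (tailSet n f) := by
  classical
  let e : (∀ i : Fin n, X i) → BoxProd X := fun x i => if h : i < n then x ⟨i, h⟩ else f i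
  have he_apply : ∀ i, Continuous fun x => e x i := fun i => by
    by_cases h : i < n
    · simpa [e, h] using continuous_apply (⟨i, h⟩ : Fin n)
    · simpa [e, h] using continuous_const
  -- only the first `n` coordinates of `e` vary, so preimages of boxes are finite intersections
  have he : Continuous e := by
    refine continuous_generateFrom_iff.mpr ?_
    rintro _ ⟨U, hU, rfl⟩
    refine isOpen_iff_forall_mem_open.mpr fun x hx => ⟨⋂ i ∈ Iio n, (e · i) ⁻¹' U i, ?_,
      (finite_Iio n).isOpen_biInter fun i _ => (hU i).preimage (he_apply i),
      mem_iInter₂.mpr fun i _ => hx i⟩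
    intro x' hx' i
    by_cases hi : i < n
    · exact mem_iInter₂.mp hx' i hi
    · simpa [e, hi] using hx i
  have hrange : range e = tailSet n f := by
    ext g
    refine ⟨?_, fun hg => ⟨fun j => g j, funext fun i => ?_⟩⟩
    · rintro ⟨x, rfl⟩ i hi
      simp [e, not_lt.mpr hi]
    · by_cases hi : i < n
      · simp [e, hi]
      · simp [e, hi, hg i (not_lt.mp hi)]
  rw [← hrange, ← image_univ]
  exact isCompact_univ.image he

end BoxProd

namespace NablaProd

open BoxProd

variable {X : ℕ → Type*} [∀ n, TopologicalSpace (X n)]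

def mk : BoxProd X → NablaProd X := Quotient.mk (nablaSetoid X)

theorem mk_surjective : Surjective (mk : BoxProd X → NablaProd X) := Quotient.mk_surjective

theorem continuous_mk : Continuous (mk : BoxProd X → NablaProd X) := continuous_coinduced_rng

theorem mk_eq_mk_iff {f g : BoxProd X} : mk f = mk g ↔ ∃ n, f ∈ tailSet n g := by
  refine Quotient.eq.trans ?_
  change {i | f i ≠ g i}.Finite ↔ _
  rw [← eventually_cofinite, Nat.cofinite_eq_atTop, eventually_atTop]
  rfl

theorem preimage_mk_singleton (g : BoxProd X) : mk ⁻¹' {mk g} = ⋃ n, tailSet n g := by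
  ext f
  simp [mk_eq_mk_iff]

theorem preimage_mk_image_mk (F : Set (BoxProd X)) :
    mk ⁻¹' (mk '' F) = ⋃ n, {g | (tailSet n g ∩ F).Nonempty} := by
  ext g
  simp only [mem_preimage, mem_image, mk_eq_mk_iff, mem_iUnion, mem_ofPred_eq, Set.Nonempty,
    mem_inter_iff]
  tauto

theorem isSigmaCompact_preimage_mk [∀ n, CompactSpace (X n)] (e : NablaProd X) :
    IsSigmaCompact (mk ⁻¹' {e}) := by
  obtain ⟨g, rfl⟩ := mk_surjective e
  exact ⟨fun n => tailSet n g, fun n => isCompact_tailSet n g, (preimage_mk_singleton g).symm⟩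

theorem exists_tail_box_disjoint [∀ n, CompactSpace (X n)] {F : Set (BoxProd X)}
    (hF : IsClosed F) {n : ℕ} {g : BoxProd X} (hg : Disjoint (tailSet n g) F) :
    ∃ T : ∀ i, Set (X i), (∀ i, IsOpen (T i)) ∧ (∀ i, n ≤ i → g i ∈ T i) ∧
      ∀ h : BoxProd X, (∀ i, n ≤ i → h i ∈ T i) → Disjoint (tailSet n h) F := by
  have hbox : ∀ y ∈ tailSet n g,
      ∃ U : ∀ i, Set (X i), (∀ i, IsOpen (U i)) ∧ y ∈ box U ∧ box U ⊆ Fᶜ :=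
    fun y hy => exists_box_subset hF.isOpen_compl (hg.subset_compl_right hy)
  choose! u hu_open hu_mem hu_sub using hbox
  obtain ⟨t, ht, hcov⟩ := (isCompact_tailSet n g).elim_nhds_subcover (fun y => box (u y))
    fun y hy => (isOpen_box (hu_open y hy)).mem_nhds (hu_mem y hy)
  refine ⟨fun i => ⋂ y ∈ t, u y i, fun i => isOpen_biInter_finset fun y hy => hu_open y (ht y hy) i,
    fun i hi => mem_iInter₂.mpr fun y hy => ?_, fun h hh => disjoint_left.mpr fun f hf hfF => ?_⟩
  · rw [← ht y hy i hi]
    exact hu_mem y (ht y hy) i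
  · -- replacing the tail of `f` by that of `g` lands in the compact set covered by the boxes
    let z : BoxProd X := fun i => if i < n then f i else g i
    have hz : z ∈ tailSet n g := fun i hi => by simp [z, not_lt.mpr hi]
    obtain ⟨y, hy, hzy⟩ := mem_iUnion₂.mp (hcov hz)
    refine hu_sub y (ht y hy) (fun i => ?_) hfF
    by_cases hi : i < n
    · simpa [z, hi] using hzy i
    · rw [hf i (not_lt.mp hi)]
      exact mem_iInter₂.mp (hh i (not_lt.mp hi)) y hy

theorem isClosed_iUnion_tailSet_inter_nonempty [∀ n, CompactSpace (X n)] {F : Set (BoxProd X)}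
    (hF : IsClosed F) : IsClosed (⋃ n, {g | (tailSet n g ∩ F).Nonempty}) := by
  simp only [← not_disjoint_iff_nonempty_inter]
  refine isOpen_compl_iff.mp (isOpen_iff_forall_mem_open.mpr fun g hg => ?_)
  simp only [mem_compl_iff, mem_iUnion, mem_ofPred_eq, not_exists, not_not] at hg
  choose T hT_open hT_mem hT_disj using fun n => exists_tail_box_disjoint hF (hg n)
  -- at coordinate `i` only the first `i + 1` tail boxes impose a condition
  let V : ∀ i, Set (X i) := fun i => ⋂ m ∈ Finset.range (i + 1), T m i
  refine ⟨box V, fun h hh => ?_, isOpen_box fun i => isOpen_biInter_finset fun m _ => hT_open m i,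
    fun i => mem_iInter₂.mpr fun m hm => hT_mem m i (Nat.lt_succ_iff.mp (Finset.mem_range.mp hm))⟩
  simp only [mem_compl_iff, mem_iUnion, mem_ofPred_eq, not_exists, not_not]
  exact fun m => hT_disj m h fun i hi =>
    mem_iInter₂.mp (hh i) m (Finset.mem_range.mpr (Nat.lt_succ_of_le hi))

theorem isClosedMap_mk [∀ n, CompactSpace (X n)] : IsClosedMap (mk : BoxProd X → NablaProd X) :=
  fun F hF => by
    have hsat := isClosed_iUnion_tailSet_inter_nonempty hF
    rw [← preimage_mk_image_mk] at hsat
    exact isClosed_coinduced.mpr hsat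

end NablaProd

/-- For compact Hausdorff spaces `X n`, the box product is a D-space iff
the nabla product is a D-space. -/
theorem boxProd_isDSpace_iff_nablaProd_isDSpace (X : ℕ → Type*)
    [∀ n, TopologicalSpace (X n)] [∀ n, CompactSpace (X n)] [∀ n, T2Space (X n)] :
    IsDSpace (BoxProd X) ↔ IsDSpace (NablaProd X) :=
  ⟨fun h => h.of_isClosedMap NablaProd.continuous_mk NablaProd.isClosedMap_mk
      NablaProd.mk_surjective,
    fun h => h.of_isClosedMap_of_isSigmaCompact_preimage NablaProd.continuous_mk
      NablaProd.isClosedMap_mk NablaProd.isSigmaCompact_preimage_mk⟩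
end

section
/- Let T be a neighbornet on a topological space X, let U be a neighbornet on X below T, let D ⊆ X be U-sticky, and let E ⊆ X be super-sticky below T. Then D' = D ∪ (E \ U(D)) is U-sticky; moreover D ⊆ D' and (D' \ D) ∩ U(D) = ∅. -/
open TopologicalSpace Set Cardinal

universe u v

/-- Being closed and discrete only forbids accumulation points, so it passes to subsets and to
finite unions. -/
theorem isClosed_and_discreteTopology_of_subset_union {X : Type*} [TopologicalSpace X]
    {A B S : Set X} (hA : IsClosed A ∧ DiscreteTopology A) (hB : IsClosed B ∧ DiscreteTopology B)
    (hS : S ⊆ A ∪ B) : IsClosed S ∧ DiscreteTopology S := by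
  simp only [← isDiscrete_iff_discreteTopology, isClosed_and_discrete_iff] at hA hB ⊢
  intro x
  refine Disjoint.mono_right (Filter.principal_mono.mpr hS) ?_
  rw [← Filter.sup_principal]
  exact disjoint_sup_right.mpr ⟨hA x, hB x⟩

/-- A point outside `U(D)` whose `U`-neighbourhood meets the new set cannot see `D` (stickiness of
`D`), so it sees `E`, and super-stickiness applied to `U` itself puts it in `E \ U(D)`. -/
theorem USticky.union_diff_biUnion {X : Type*} [TopologicalSpace X] {T U : X → Set X}
    {D E : Set X} (hU : IsNeighbornet U) (hbelow : IsBelow U T) (hD : USticky U D)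
    (hE : SuperSticky T E) : USticky U (D ∪ (E \ ⋃ d ∈ D, U d)) := by
  obtain ⟨hDc, hDd, hDs⟩ := hD
  obtain ⟨hEc, hEd, hEs⟩ := hE
  obtain ⟨hc, hd⟩ := isClosed_and_discreteTopology_of_subset_union ⟨hDc, hDd⟩ ⟨hEc, hEd⟩
    (union_subset_union_right D sdiff_subset)
  refine ⟨hc, hd, fun x hx => ?_⟩
  by_cases hxD : x ∈ ⋃ d ∈ D, U d
  · exact biUnion_subset_biUnion_left subset_union_left hxD
  have hxE : x ∈ E := by
    obtain ⟨y, hyU, hyD | ⟨hyE, -⟩⟩ := hx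
    · exact absurd (hDs x ⟨y, hyU, hyD⟩) hxD
    · exact hEs U hU hbelow x ⟨y, hyU, hyE⟩
  exact mem_biUnion (Or.inr ⟨hxE, hxD⟩) (hU x).2

theorem uSticky_union_superSticky_diff_general {X : Type*} [TopologicalSpace X]
    (T U : X → Set X) (hU : IsNeighbornet U)
    (hbelow : IsBelow U T) (D : Set X) (hD : USticky U D)
    (E : Set X) (hE : SuperSticky T E) :
    USticky U (D ∪ (E \ ⋃ d ∈ D, U d)) ∧
      D ⊆ D ∪ (E \ ⋃ d ∈ D, U d) ∧
      ((D ∪ (E \ ⋃ d ∈ D, U d)) \ D) ∩ (⋃ d ∈ D, U d) = ∅ := by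
  refine ⟨hD.union_diff_biUnion hU hbelow hE, subset_union_left, ?_⟩
  rw [union_sdiff_left, ← disjoint_iff_inter_eq_empty]
  exact disjoint_sdiff_left.mono_left sdiff_subset

/-- Growing a `U`-sticky set by a super-sticky set. -/
theorem uSticky_union_superSticky_diff {X : Type*} [TopologicalSpace X]
    (T U : X → Set X) (hT : IsNeighbornet T) (hU : IsNeighbornet U)
    (hbelow : IsBelow U T) (D : Set X) (hD : USticky U D)
    (E : Set X) (hE : SuperSticky T E) :
    USticky U (D ∪ (E \ ⋃ d ∈ D, U d)) ∧
      D ⊆ D ∪ (E \ ⋃ d ∈ D, U d) ∧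
      ((D ∪ (E \ ⋃ d ∈ D, U d)) \ D) ∩ (⋃ d ∈ D, U d) = ∅ :=
  uSticky_union_superSticky_diff_general T U hU hbelow D hD E hE
end

section
/- Let X be a topological space with a topological partial order ⪯. (1) If for every x ∈ X the up-set ↑x, with the subspace topology, is a D-space, then X is a D-space. (2) If for every x ∈ X the up-set ↑x, with the subspace topology, is hereditarily D, then X is hereditarily D. -/
open TopologicalSpace Set Cardinal

universe u v

/-!
Fix a well-order of `X` and a neighbornet `U`. Recursively along it, at stage `x` choose a closed
discrete `F x` whose `U`-neighbourhoods cover the points of `↑x` not covered at earlier stages;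
this closed part of the D-space `↑x` is again D. The union of all `F x` covers `X`. If `m` is the
first stage covering `x`, say by `U d₀` with `d₀ ∈ F m`, the open set `↓x ∩ U d₀` meets no other
stage: an earlier stage with a point below `x` would already have covered `x`, and a later stage
avoids all points covered before it. So the union is locally a single closed discrete `F m`, hence
closed discrete. For the hereditary version, the order restricts to a topological order on any
subspace, whose up-sets embed in those of `X`.
-/

open Filter Topology Function

section ClosedDiscrete

variable {X : Type*} [TopologicalSpace X]

lemma isClosed_and_isDiscrete_of_locally {D : Set X}
    (h : ∀ x, ∃ W ∈ 𝓝 x, ∃ E, IsClosed E ∧ IsDiscrete E ∧ W ∩ D ⊆ E) :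
    IsClosed D ∧ IsDiscrete D := by
  refine isClosed_and_discrete_iff.2 fun x => ?_
  obtain ⟨W, hW, E, hEc, hEd, hWE⟩ := h x
  have hEx := disjoint_principal_right.1 (isClosed_and_discrete_iff.1 ⟨hEc, hEd⟩ x)
  exact disjoint_principal_right.2 (mem_of_superset
    (inter_mem (mem_nhdsWithin_of_mem_nhds hW) hEx) fun y hy hyD => hy.2 (hWE ⟨hy.1, hyD⟩))

structure IsClosedDiscreteKernel (U : X → Set X) (Z E : Set X) : Prop where
  subset : E ⊆ Z
  isClosed : IsClosed E
  isDiscrete : IsDiscrete E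
  subset_biUnion : Z ⊆ ⋃ d ∈ E, U d

end ClosedDiscrete

namespace IsDSpace

variable {X Y : Type*} [TopologicalSpace X] [TopologicalSpace Y]

lemma of_isClosedEmbedding {f : X → Y} (hY : IsDSpace Y) (hf : IsClosedEmbedding f) :
    IsDSpace X := by
  intro U hU
  choose W hWo hWU using fun x => hf.isInducing.isOpen_iff.1 (hU x).1
  set V : Y → Set Y := extend f W fun _ => (range f)ᶜ with hV
  have hV_out : ∀ y ∉ range f, V y = (range f)ᶜ := fun y hy =>
    extend_apply' _ _ _ fun ⟨x, hx⟩ => hy ⟨x, hx⟩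
  have hVnet : IsNeighbornet V := by
    intro y
    by_cases hy : y ∈ range f
    · obtain ⟨x, rfl⟩ := hy
      rw [hV, hf.injective.extend_apply]
      exact ⟨hWo x, by rw [← mem_preimage, hWU]; exact (hU x).2⟩
    · rw [hV_out y hy]
      exact ⟨hf.isClosed_range.isOpen_compl, hy⟩
  obtain ⟨D, hDc, hDd, hDV⟩ := hY V hVnet
  refine ⟨f ⁻¹' D, hDc.preimage hf.continuous, ?_, eq_univ_of_forall fun x => ?_⟩
  · exact isDiscrete_iff_discreteTopology.1 <| (isDiscrete_iff_discreteTopology.2 hDd).preimage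
      hf.continuous.continuousOn hf.injective
  · obtain ⟨d, hd, hxd⟩ := mem_iUnion₂.1 (eq_univ_iff_forall.1 hDV (f x))
    obtain ⟨x', rfl⟩ : d ∈ range f := by
      by_contra hd'
      rw [hV_out d hd'] at hxd
      exact hxd (mem_range_self x)
    rw [hV, hf.injective.extend_apply] at hxd
    exact mem_biUnion hd (hWU x' ▸ hxd)

lemma exists_isClosedDiscreteKernel {A Z : Set X} (hA : IsDSpace A) (hZA : Z ⊆ A)
    (hZ : IsClosed Z) {U : X → Set X} (hU : IsNeighbornet U) :
    ∃ E, IsClosedDiscreteKernel U Z E := by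
  have hZD : IsDSpace Z :=
    hA.of_isClosedEmbedding (.inclusion hZA (hZ.preimage continuous_subtype_val))
  obtain ⟨E, hEc, hEd, hEU⟩ := hZD (fun z => Subtype.val ⁻¹' U z)
    fun z => ⟨(hU z).1.preimage continuous_subtype_val, (hU z).2⟩
  refine ⟨Subtype.val '' E, image_subset_range _ _ |>.trans Subtype.range_val.subset,
    hZ.isClosedEmbedding_subtypeVal.isClosedMap E hEc,
    (isDiscrete_iff_discreteTopology.2 hEd).image IsInducing.subtypeVal, fun z hz => ?_⟩
  obtain ⟨d, hd, hzd⟩ := mem_iUnion₂.1 (eq_univ_iff_forall.1 hEU ⟨z, hz⟩)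
  exact mem_biUnion (mem_image_of_mem _ hd) hzd

end IsDSpace

lemma HereditarilyD.isDSpace_of_isEmbedding {X Y : Type*} [TopologicalSpace X]
    [TopologicalSpace Y] {f : X → Y} (hY : HereditarilyD Y) (hf : IsEmbedding f) :
    IsDSpace X :=
  (hY (range f)).of_isClosedEmbedding hf.toHomeomorph.isClosedEmbedding

section WellOrderedCover

variable {X : Type*} (r : X → X → Prop) (U : X → Set X)

def coveredBelow (F : X → Set X) (x : X) : Set X := ⋃ y, ⋃ (_ : r y x), ⋃ d ∈ F y, U d

variable {r U} in
lemma mem_coveredBelow {F : X → Set X} {x z : X} :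
    z ∈ coveredBelow r U F x ↔ ∃ y, r y x ∧ z ∈ ⋃ d ∈ F y, U d := by
  rw [coveredBelow, mem_iUnion₂]
  simp only [exists_prop]

variable [TopologicalSpace X]

lemma exists_forall_isClosedDiscreteKernel [IsWellFounded X r] (S : X → Set X)
    (hU : ∀ x, IsOpen (U x))
    (hker : ∀ x G, IsOpen G → ∃ E, IsClosedDiscreteKernel U (Gᶜ ∩ S x) E) :
    ∃ F : X → Set X, ∀ x, IsClosedDiscreteKernel U ((coveredBelow r U F x)ᶜ ∩ S x) (F x) := by
  have : ∀ x G, ∃ E, IsOpen G → IsClosedDiscreteKernel U (Gᶜ ∩ S x) E := fun x G => by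
    by_cases hG : IsOpen G
    · exact (hker x G hG).imp fun _ hE _ => hE
    · exact ⟨∅, fun h => absurd h hG⟩
  choose K hK using this
  let F := IsWellFounded.wf.fix (C := fun _ => Set X) fun x ih =>
    K x (⋃ y, ⋃ h : r y x, ⋃ d ∈ ih y h, U d)
  refine ⟨F, fun x => ?_⟩
  rw [show F x = K x (coveredBelow r U F x) from IsWellFounded.wf.fix_eq _ x]
  exact hK x _ (isOpen_iUnion fun _ => isOpen_iUnion fun _ => isOpen_biUnion fun d _ => hU d)

variable [PartialOrder X] {r U} {F : X → Set X}

lemma exists_mem_biUnion_of_forall_isClosedDiscreteKernel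
    (hF : ∀ x, IsClosedDiscreteKernel U ((coveredBelow r U F x)ᶜ ∩ Ici x) (F x)) (x : X) :
    ∃ y, x ∈ ⋃ d ∈ F y, U d := by
  by_cases hx : x ∈ coveredBelow r U F x
  · obtain ⟨y, -, hy⟩ := mem_coveredBelow.1 hx
    exact ⟨y, hy⟩
  · exact ⟨x, (hF x).subset_biUnion ⟨hx, le_rfl⟩⟩

lemma exists_mem_nhds_inter_iUnion_subset [IsWellOrder X r] (hIic : ∀ x : X, IsOpen (Iic x))
    (hU : ∀ x, IsOpen (U x))
    (hF : ∀ x, IsClosedDiscreteKernel U ((coveredBelow r U F x)ᶜ ∩ Ici x) (F x)) (x : X) :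
    ∃ W ∈ 𝓝 x, ∃ m, W ∩ ⋃ y, F y ⊆ F m := by
  obtain ⟨m, hm, hmin⟩ := (IsWellFounded.wf (r := r)).has_min {y | x ∈ ⋃ d ∈ F y, U d}
    (exists_mem_biUnion_of_forall_isClosedDiscreteKernel hF x)
  obtain ⟨d₀, hd₀, hxd₀⟩ := mem_iUnion₂.1 hm
  refine ⟨Iic x ∩ U d₀, inter_mem ((hIic x).mem_nhds self_mem_Iic) ((hU d₀).mem_nhds hxd₀), m, ?_⟩
  rintro z ⟨⟨hzx, hzd₀⟩, hz⟩
  obtain ⟨y, hzy⟩ := mem_iUnion.1 hz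
  rcases trichotomous_of r y m with hym | rfl | hmy
  · -- `y ≤ z ≤ x` puts `x` in the part of `Ici y` left over at stage `y`, which `F y` covers
    have hx_left : x ∈ (coveredBelow r U F y)ᶜ ∩ Ici y := by
      refine ⟨fun hx => ?_, ((hF y).subset hzy).2.trans hzx⟩
      obtain ⟨y', hy'y, hy'⟩ := mem_coveredBelow.1 hx
      exact hmin y' hy' (_root_.trans hy'y hym)
    exact (hmin y ((hF y).subset_biUnion hx_left) hym).elim
  · exact hzy
  · exact absurd (mem_coveredBelow.2 ⟨m, hmy, mem_biUnion hd₀ hzd₀⟩) ((hF y).subset hzy).1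

end WellOrderedCover

section TopologicalOrder

variable {X : Type*} [TopologicalSpace X] [PartialOrder X]

lemma isOpen_Iic_of_Iic_mem_nhds (htop : ∀ x : X, Iic x ∈ 𝓝 x) (x : X) : IsOpen (Iic x) :=
  isOpen_iff_mem_nhds.2 fun _ hy => mem_of_superset (htop _) (Iic_subset_Iic.2 hy)

lemma isClosed_Ici_of_Iic_mem_nhds (htop : ∀ x : X, Iic x ∈ 𝓝 x) (x : X) : IsClosed (Ici x) :=
  isOpen_compl_iff.1 <| isOpen_iff_mem_nhds.2 fun _ hy =>
    mem_of_superset (htop _) fun _ hz hxz => hy (hxz.trans hz)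

theorem IsDSpace.of_isDSpace_Ici (htop : ∀ x : X, Iic x ∈ 𝓝 x)
    (hD : ∀ x : X, IsDSpace (Ici x)) : IsDSpace X := by
  intro U hU
  have hUo : ∀ x, IsOpen (U x) := fun x => (hU x).1
  obtain ⟨F, hF⟩ := exists_forall_isClosedDiscreteKernel WellOrderingRel U Ici hUo
    fun x G hG => (hD x).exists_isClosedDiscreteKernel inter_subset_right
      (hG.isClosed_compl.inter (isClosed_Ici_of_Iic_mem_nhds htop x)) hU
  have hFcd : IsClosed (⋃ y, F y) ∧ IsDiscrete (⋃ y, F y) :=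
    isClosed_and_isDiscrete_of_locally fun x => by
      obtain ⟨W, hW, m, hWm⟩ :=
        exists_mem_nhds_inter_iUnion_subset (isOpen_Iic_of_Iic_mem_nhds htop) hUo hF x
      exact ⟨W, hW, F m, (hF m).isClosed, (hF m).isDiscrete, hWm⟩
  refine ⟨⋃ y, F y, hFcd.1, isDiscrete_iff_discreteTopology.1 hFcd.2,
    eq_univ_of_forall fun x => ?_⟩
  obtain ⟨y, hy⟩ := exists_mem_biUnion_of_forall_isClosedDiscreteKernel hF x
  obtain ⟨d, hd, hxd⟩ := mem_iUnion₂.1 hy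
  exact mem_biUnion (mem_iUnion_of_mem y hd) hxd

theorem HereditarilyD.of_hereditarilyD_Ici (htop : ∀ x : X, Iic x ∈ 𝓝 x)
    (hD : ∀ x : X, HereditarilyD (Ici x)) : HereditarilyD X := fun A =>
  IsDSpace.of_isDSpace_Ici
    (fun a => (mem_nhds_subtype A a _).2 ⟨Iic (a : X), htop a, fun _ hb => hb⟩)
    fun a => (hD a).isDSpace_of_isEmbedding
      ((IsEmbedding.subtypeVal.comp IsEmbedding.subtypeVal).codRestrict (Ici (a : X))
        fun b : Ici a => b.2)

end TopologicalOrder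

/-- For a topological partial order: if all up-sets are D then the space is D, and
if all up-sets are hereditarily D then the space is hereditarily D. -/
theorem isDSpace_of_upsets {X : Type*} [TopologicalSpace X] [PartialOrder X]
    (htop : ∀ x : X, {y | y ≤ x} ∈ nhds x) :
    ((∀ x : X, IsDSpace ({y | x ≤ y} : Set X)) → IsDSpace X) ∧
      ((∀ x : X, HereditarilyD ({y | x ≤ y} : Set X)) → HereditarilyD X) :=
  ⟨IsDSpace.of_isDSpace_Ici htop, HereditarilyD.of_hereditarilyD_Ici htop⟩
end
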